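/- Let A ∈ ℝ^{n×n}, B ∈ ℝ^{n×m}, C ∈ ℝ^{p×n}, D ∈ ℝ^{p×m}, B_d ∈ ℝ^{n×n_d}, F₁, F₂ ∈ ℝ^{m×n}, and let K ∈ ℝ^{N×N} be symmetric with eigenvalues γ₁,…,γ_N counted with multiplicity. For γ ∈ ℝ set A_γ = A − B(F₁+γF₂) and C_γ = C − D(F₁+γF₂), and set Â = I_N⊗(A−BF₁) − K⊗(BF₂) and Ĉ = I_N⊗(C−DF₁) − K⊗(DF₂). Let s ∈ ℂ be such that sI_n − A_{γᵢ} is invertible for every i. Then sI_{Nn} − Â is invertible and the squared Frobenius norm satisfies ‖Ĉ(sI_{Nn} − Â)⁻¹(I_N⊗B_d)‖_F² = Σ_{i=1}^{N} ‖C_{γᵢ}(sI_n − A_{γᵢ})⁻¹B_d‖_F². -/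

import Mathlib

/-!
Diagonalise `K = U Λ Uᴴ` with `U` orthogonal. Conjugation by `U ⊗ I` turns `I ⊗ X − K ⊗ Y` into
the block-diagonal matrix with blocks `X − γᵢ Y`. This applies to `sI − Â`, `Ĉ` and `I ⊗ B_d`, and
such conjugates multiply and invert blockwise, so the transfer matrix is `U ⊗ I` times the block
diagonal of the `N` transfer matrices `C_{γᵢ} (sI − A_{γᵢ})⁻¹ B_d` times `Uᴴ ⊗ I`. The Frobenius
norm is unitarily invariant and additive over diagonal blocks.
-/

open Matrix
open scoped Kronecker

noncomputable def sqFrobNorm {α β : Type*} [Fintype α] [Fintype β]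
    (M : Matrix α β ℂ) : ℝ :=
  ∑ i, ∑ j, ‖M i j‖ ^ 2

namespace Matrix

variable {R ι α β γ : Type*} [DecidableEq ι]

/-- `blockDiagonal` with the block index as the first coordinate, as in `diagonal d ⊗ₖ M`. -/
def blockDiagonalLeft [Zero R] (f : ι → Matrix α β R) : Matrix (ι × α) (ι × β) R :=
  reindex (Equiv.prodComm α ι) (Equiv.prodComm β ι) (blockDiagonal f)

theorem diagonal_kronecker_eq_blockDiagonalLeft [MulZeroClass R] (d : ι → R) (M : Matrix α β R) :
    diagonal d ⊗ₖ M = blockDiagonalLeft fun i => d i • M :=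
  diagonal_kronecker d M

theorem blockDiagonalLeft_sub [AddGroup R] (f g : ι → Matrix α β R) :
    blockDiagonalLeft (fun i => f i - g i) = blockDiagonalLeft f - blockDiagonalLeft g := by
  change reindex _ _ (blockDiagonal (f - g)) = _
  rw [blockDiagonal_sub]
  rfl

theorem blockDiagonalLeft_mul [Fintype ι] [Fintype β] [NonUnitalNonAssocSemiring R]
    (f : ι → Matrix α β R) (g : ι → Matrix β γ R) :
    blockDiagonalLeft f * blockDiagonalLeft g = blockDiagonalLeft fun i => f i * g i := by
  simp only [blockDiagonalLeft, reindex_apply, submatrix_mul_equiv, blockDiagonal_mul]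

section BlockDiagonalConj

variable [Fintype ι] [DecidableEq α] [DecidableEq β] [Fintype α] [Fintype β]
  [CommRing R] [StarRing R]

def blockDiagonalConj (U : Matrix ι ι R) (f : ι → Matrix α β R) : Matrix (ι × α) (ι × β) R :=
  (U ⊗ₖ (1 : Matrix α α R)) * blockDiagonalLeft f * (star U ⊗ₖ (1 : Matrix β β R))

theorem blockDiagonalConj_smul (U : Matrix ι ι R) (d : ι → R) (M : Matrix α β R) :
    blockDiagonalConj U (fun i => d i • M) = (U * diagonal d * star U) ⊗ₖ M := by
  rw [blockDiagonalConj, ← diagonal_kronecker_eq_blockDiagonalLeft, ← mul_kronecker_mul,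
    ← mul_kronecker_mul, Matrix.one_mul, Matrix.mul_one]

theorem blockDiagonalConj_const {U : Matrix ι ι R} (hU : U ∈ unitaryGroup ι R) (M : Matrix α β R) :
    blockDiagonalConj U (fun _ => M) = 1 ⊗ₖ M := by
  simpa [hU.2] using blockDiagonalConj_smul U 1 M

theorem blockDiagonalConj_sub (U : Matrix ι ι R) (f g : ι → Matrix α β R) :
    blockDiagonalConj U (fun i => f i - g i) = blockDiagonalConj U f - blockDiagonalConj U g := by
  rw [blockDiagonalConj, blockDiagonalLeft_sub, Matrix.mul_sub, Matrix.sub_mul]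
  rfl

theorem one_kronecker_sub_kronecker_eq_blockDiagonalConj {U : Matrix ι ι R}
    (hU : U ∈ unitaryGroup ι R) (d : ι → R) (X Y : Matrix α β R) :
    1 ⊗ₖ X - (U * diagonal d * star U) ⊗ₖ Y = blockDiagonalConj U fun i => X - d i • Y := by
  rw [blockDiagonalConj_sub U (fun _ => X), blockDiagonalConj_const hU, blockDiagonalConj_smul]

theorem blockDiagonalConj_mul [Fintype γ] [DecidableEq γ] {U : Matrix ι ι R}
    (hU : U ∈ unitaryGroup ι R) (f : ι → Matrix α β R) (g : ι → Matrix β γ R) :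
    blockDiagonalConj U f * blockDiagonalConj U g = blockDiagonalConj U fun i => f i * g i := by
  have hmid : (star U ⊗ₖ (1 : Matrix β β R)) * (U ⊗ₖ 1) = 1 := by
    rw [← mul_kronecker_mul, hU.1, Matrix.one_mul, one_kronecker_one]
  simp only [blockDiagonalConj, ← blockDiagonalLeft_mul, Matrix.mul_assoc]
  rw [← Matrix.mul_assoc (star U ⊗ₖ 1), hmid, Matrix.one_mul]

theorem blockDiagonalConj_mul_inv {U : Matrix ι ι R} (hU : U ∈ unitaryGroup ι R)
    {f : ι → Matrix α α R} (hf : ∀ i, IsUnit (f i)) :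
    blockDiagonalConj U f * blockDiagonalConj U (fun i => (f i)⁻¹) = 1 := by
  rw [blockDiagonalConj_mul hU]
  simp_rw [mul_nonsing_inv _ ((isUnit_iff_isUnit_det _).mp (hf _))]
  rw [blockDiagonalConj_const hU, one_kronecker_one]

theorem isUnit_blockDiagonalConj {U : Matrix ι ι R} (hU : U ∈ unitaryGroup ι R)
    {f : ι → Matrix α α R} (hf : ∀ i, IsUnit (f i)) : IsUnit (blockDiagonalConj U f) :=
  (isUnit_iff_isUnit_det _).mpr (isUnit_det_of_right_inverse (blockDiagonalConj_mul_inv hU hf))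

theorem inv_blockDiagonalConj {U : Matrix ι ι R} (hU : U ∈ unitaryGroup ι R)
    {f : ι → Matrix α α R} (hf : ∀ i, IsUnit (f i)) :
    (blockDiagonalConj U f)⁻¹ = blockDiagonalConj U fun i => (f i)⁻¹ :=
  inv_eq_right_inv (blockDiagonalConj_mul_inv hU hf)

end BlockDiagonalConj
end Matrix

section FrobeniusNorm

variable {ι l m n o : Type*} [Fintype ι] [DecidableEq ι] [Fintype l] [Fintype m] [Fintype n]
  [Fintype o]

theorem sqFrobNorm_eq_re_trace (M : Matrix m n ℂ) : sqFrobNorm M = (trace (Mᴴ * M)).re := by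
  simp only [sqFrobNorm, trace, diag, mul_apply, conjTranspose_apply, Complex.re_sum]
  rw [Finset.sum_comm]
  refine Finset.sum_congr rfl fun i _ => Finset.sum_congr rfl fun j _ => ?_
  rw [Complex.star_def, ← Complex.normSq_eq_conj_mul_self, Complex.ofReal_re,
    Complex.normSq_eq_norm_sq]

theorem sqFrobNorm_mul_of_conjTranspose_mul_self_eq_one [DecidableEq m] {V : Matrix l m ℂ}
    (hV : Vᴴ * V = 1) (M : Matrix m n ℂ) : sqFrobNorm (V * M) = sqFrobNorm M := by
  rw [sqFrobNorm_eq_re_trace, sqFrobNorm_eq_re_trace, conjTranspose_mul, Matrix.mul_assoc,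
    ← Matrix.mul_assoc Vᴴ, hV, Matrix.one_mul]

theorem sqFrobNorm_mul_of_mul_conjTranspose_eq_one [DecidableEq n] {W : Matrix n o ℂ}
    (hW : W * Wᴴ = 1) (M : Matrix m n ℂ) : sqFrobNorm (M * W) = sqFrobNorm M := by
  rw [sqFrobNorm_eq_re_trace, sqFrobNorm_eq_re_trace, conjTranspose_mul, trace_mul_comm,
    Matrix.mul_assoc, ← Matrix.mul_assoc W, hW, Matrix.one_mul, trace_mul_comm]

theorem sqFrobNorm_reindex (e₁ : m ≃ l) (e₂ : n ≃ o) (M : Matrix m n ℂ) :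
    sqFrobNorm (reindex e₁ e₂ M) = sqFrobNorm M := by
  simp only [sqFrobNorm, reindex_apply, submatrix_apply]
  rw [← e₁.sum_comp]
  simp_rw [← e₂.sum_comp, Equiv.symm_apply_apply]

theorem sqFrobNorm_blockDiagonal [DecidableEq o] (f : o → Matrix m n ℂ) :
    sqFrobNorm (blockDiagonal f) = ∑ k, sqFrobNorm (f k) := by
  rw [sqFrobNorm_eq_re_trace, blockDiagonal_conjTranspose, ← blockDiagonal_mul,
    trace_blockDiagonal, Complex.re_sum]
  simp only [sqFrobNorm_eq_re_trace]

theorem sqFrobNorm_blockDiagonalLeft (f : ι → Matrix m n ℂ) :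
    sqFrobNorm (blockDiagonalLeft f) = ∑ i, sqFrobNorm (f i) := by
  rw [blockDiagonalLeft, sqFrobNorm_reindex, sqFrobNorm_blockDiagonal]

theorem sqFrobNorm_blockDiagonalConj [DecidableEq m] [DecidableEq n] {U : Matrix ι ι ℂ}
    (hU : U ∈ unitaryGroup ι ℂ) (f : ι → Matrix m n ℂ) :
    sqFrobNorm (blockDiagonalConj U f) = ∑ i, sqFrobNorm (f i) := by
  have hV : (U ⊗ₖ (1 : Matrix m m ℂ))ᴴ * (U ⊗ₖ 1) = 1 := by
    rw [conjTranspose_kronecker, conjTranspose_one, ← star_eq_conjTranspose, ← mul_kronecker_mul,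
      hU.1, Matrix.one_mul, one_kronecker_one]
  have hW : (star U ⊗ₖ (1 : Matrix n n ℂ)) * (star U ⊗ₖ 1)ᴴ = 1 := by
    rw [conjTranspose_kronecker, conjTranspose_one, ← star_eq_conjTranspose, star_star,
      ← mul_kronecker_mul, hU.1, Matrix.one_mul, one_kronecker_one]
  rw [blockDiagonalConj, sqFrobNorm_mul_of_mul_conjTranspose_eq_one hW,
    sqFrobNorm_mul_of_conjTranspose_mul_self_eq_one hV, sqFrobNorm_blockDiagonalLeft]

end FrobeniusNorm

section RealToComplex

variable {l m n o : Type*}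

theorem Matrix.map_ofReal_kronecker (P : Matrix l m ℝ) (Q : Matrix n o ℝ) :
    (P ⊗ₖ Q).map Complex.ofReal = P.map Complex.ofReal ⊗ₖ Q.map Complex.ofReal := by
  ext ⟨i, j⟩ ⟨i', j'⟩
  simp [kroneckerMap_apply]

theorem Matrix.map_ofReal_mul [Fintype m] (P : Matrix l m ℝ) (Q : Matrix m n ℝ) :
    (P * Q).map Complex.ofReal = P.map Complex.ofReal * Q.map Complex.ofReal :=
  Matrix.map_mul (f := Complex.ofRealHom)

theorem Matrix.map_ofReal_conjTranspose (M : Matrix m n ℝ) :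
    Mᴴ.map Complex.ofReal = (M.map Complex.ofReal)ᴴ :=
  conjTranspose_map _ fun x => (Complex.conj_ofReal x).symm

theorem Matrix.map_ofReal_sub_mul_add_smul [Fintype m] (X : Matrix l n ℝ) (Y : Matrix l m ℝ)
    (F G : Matrix m n ℝ) (r : ℝ) :
    (X - Y * (F + r • G)).map Complex.ofReal =
      (X - Y * F).map Complex.ofReal - (r : ℂ) • (Y * G).map Complex.ofReal := by
  rw [Matrix.mul_add, Matrix.mul_smul, sub_add_eq_sub_sub]
  ext i j
  simp

theorem Matrix.IsHermitian.exists_unitary_map_ofReal_eq [Fintype n] [DecidableEq n]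
    {K : Matrix n n ℝ} (hK : K.IsHermitian) :
    ∃ U ∈ unitaryGroup n ℂ,
      K.map Complex.ofReal = U * diagonal (fun i => (hK.eigenvalues i : ℂ)) * star U := by
  set V : Matrix n n ℝ := (hK.eigenvectorUnitary : Matrix n n ℝ)
  have hmap : ∀ M : Matrix n n ℝ, (M * star V).map Complex.ofReal =
      M.map Complex.ofReal * star (V.map Complex.ofReal) := fun M => by
    rw [map_ofReal_mul, star_eq_conjTranspose, star_eq_conjTranspose, map_ofReal_conjTranspose]
  refine ⟨V.map Complex.ofReal, ?_, ?_⟩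
  · rw [mem_unitaryGroup_iff, ← hmap, mem_unitaryGroup_iff.mp hK.eigenvectorUnitary.2]
    simp
  · conv_lhs => rw [hK.spectral_theorem, Unitary.conjStarAlgAut_apply, RCLike.ofReal_real_eq_id]
    rw [hmap, map_ofReal_mul, diagonal_map (by simp)]
    rfl

end RealToComplex

theorem isUnit_resolvent_and_sqFrobNorm_transfer_kronecker {ι n p q : Type*} [Fintype ι]
    [DecidableEq ι] [Fintype n] [DecidableEq n] [Fintype p] [DecidableEq p] [Fintype q]
    [DecidableEq q] {U : Matrix ι ι ℂ} (hU : U ∈ unitaryGroup ι ℂ) {d : ι → ℂ}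
    {K : Matrix ι ι ℂ} (hK : K = U * diagonal d * star U) (A₁ A₂ : Matrix n n ℂ)
    (C₁ C₂ : Matrix p n ℂ) (E : Matrix n q ℂ) {s : ℂ}
    (hs : ∀ i, IsUnit (s • (1 : Matrix n n ℂ) - (A₁ - d i • A₂))) :
    IsUnit (s • (1 : Matrix (ι × n) (ι × n) ℂ) - ((1 : Matrix ι ι ℂ) ⊗ₖ A₁ - K ⊗ₖ A₂)) ∧
      sqFrobNorm (((1 : Matrix ι ι ℂ) ⊗ₖ C₁ - K ⊗ₖ C₂) * (s • 1 - (1 ⊗ₖ A₁ - K ⊗ₖ A₂))⁻¹ *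
          ((1 : Matrix ι ι ℂ) ⊗ₖ E)) =
        ∑ i, sqFrobNorm ((C₁ - d i • C₂) * (s • 1 - (A₁ - d i • A₂))⁻¹ * E) := by
  subst hK
  have hres : s • (1 : Matrix (ι × n) (ι × n) ℂ) -
      ((1 : Matrix ι ι ℂ) ⊗ₖ A₁ - (U * diagonal d * star U) ⊗ₖ A₂) =
      blockDiagonalConj U fun i => s • 1 - (A₁ - d i • A₂) := by
    rw [blockDiagonalConj_sub U (fun _ => s • 1), blockDiagonalConj_const hU,
      ← one_kronecker_sub_kronecker_eq_blockDiagonalConj hU, kronecker_smul, one_kronecker_one]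
  rw [hres, one_kronecker_sub_kronecker_eq_blockDiagonalConj hU, ← blockDiagonalConj_const hU E,
    inv_blockDiagonalConj hU hs, blockDiagonalConj_mul hU, blockDiagonalConj_mul hU,
    sqFrobNorm_blockDiagonalConj hU]
  exact ⟨isUnit_blockDiagonalConj hU hs, rfl⟩

/-- Decomposition of the squared Frobenius norm of the closed-loop transfer matrix: if
`K` is symmetric with eigenvalues `γ₁,…,γ_N` (with multiplicity) and `sIₙ − A_{γᵢ}` is
invertible for every `i`, then `sI_{Nn} − Â` is invertible and
`‖Ĉ (sI − Â)⁻¹ (I_N ⊗ B_d)‖_F² = Σᵢ ‖C_{γᵢ} (sI − A_{γᵢ})⁻¹ B_d‖_F²`. -/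
theorem stmt_11 {n m p nd N : ℕ}
    (A : Matrix (Fin n) (Fin n) ℝ) (B : Matrix (Fin n) (Fin m) ℝ)
    (C : Matrix (Fin p) (Fin n) ℝ) (D : Matrix (Fin p) (Fin m) ℝ)
    (Bd : Matrix (Fin n) (Fin nd) ℝ) (F₁ F₂ : Matrix (Fin m) (Fin n) ℝ)
    (K : Matrix (Fin N) (Fin N) ℝ) (hK : K.IsHermitian)
    (Ahat : Matrix (Fin N × Fin n) (Fin N × Fin n) ℝ)
    (hAhat : Ahat = (1 : Matrix (Fin N) (Fin N) ℝ) ⊗ₖ (A - B * F₁) - K ⊗ₖ (B * F₂))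
    (Chat : Matrix (Fin N × Fin p) (Fin N × Fin n) ℝ)
    (hChat : Chat = (1 : Matrix (Fin N) (Fin N) ℝ) ⊗ₖ (C - D * F₁) - K ⊗ₖ (D * F₂))
    (s : ℂ)
    (hs : ∀ i : Fin N,
      IsUnit (s • (1 : Matrix (Fin n) (Fin n) ℂ)
        - (A - B * (F₁ + hK.eigenvalues i • F₂)).map Complex.ofReal)) :
    IsUnit (s • (1 : Matrix (Fin N × Fin n) (Fin N × Fin n) ℂ) - Ahat.map Complex.ofReal) ∧
    sqFrobNorm (Chat.map Complex.ofReal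
        * (s • (1 : Matrix (Fin N × Fin n) (Fin N × Fin n) ℂ) - Ahat.map Complex.ofReal)⁻¹
        * ((1 : Matrix (Fin N) (Fin N) ℝ) ⊗ₖ Bd).map Complex.ofReal)
      = ∑ i : Fin N,
          sqFrobNorm ((C - D * (F₁ + hK.eigenvalues i • F₂)).map Complex.ofReal
            * (s • (1 : Matrix (Fin n) (Fin n) ℂ)
                - (A - B * (F₁ + hK.eigenvalues i • F₂)).map Complex.ofReal)⁻¹
            * Bd.map Complex.ofReal) := by
  obtain ⟨U, hU, hKU⟩ := hK.exists_unitary_map_ofReal_eq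
  simp only [map_ofReal_sub_mul_add_smul] at hs ⊢
  rw [hAhat, hChat, Matrix.map_sub _ Complex.ofReal_sub, Matrix.map_sub _ Complex.ofReal_sub]
  simp only [map_ofReal_kronecker, Matrix.map_one _ Complex.ofReal_zero Complex.ofReal_one]
  exact isUnit_resolvent_and_sqFrobNorm_transfer_kronecker hU hKU _ _ _ _ _ hs
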